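/- arXiv:2006.15726 — 8 statements merged into one kernel-verified Lean document; each statement's English description precedes it below -/
import Mathlib

section
/- The third power moment: Σ_{a∈F} W_{F,s}(a)^3 = p^{2n} · |R|, where R = {x ∈ F : (1-x)^s + x^s - 1 = 0}, assuming W_{F,s}(a) is real for all a. -/
open scoped BigOperators

/-- The Weil sum `W_{F,s}(a) = ∑_{x ∈ F} μ(x^s - a x)`, where `μ` is the canonical
additive character `μ(x) = ζ_p^{Tr_{F/𝔽_p}(x)}` of the finite field `F`. -/
noncomputable def weilSum (p : ℕ) (F : Type) [Field F] [Fintype F]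
    [Algebra (ZMod p) F] (s : ℕ) (a : F) : ℂ :=
  ∑ x : F, Complex.exp (2 * Real.pi * Complex.I *
    ((Algebra.trace (ZMod p) F (x ^ s - a * x)).val : ℂ) / (p : ℂ))

/-!
Expanding the cube and summing over `a` first, orthogonality of the additive character `ψ` leaves
`q · ∑_{x+y+z=0} ψ(x^s + y^s + z^s)`. As `s` is odd or `F` has characteristic 2, this is
`q · ∑_{x,y} ψ(x^s + y^s - (x+y)^s)`. Writing `x = u t`, `y = (1-u) t` with `t = x + y` turns the
double sum into `∑_{t,u} ψ(t^s ((1-u)^s + u^s - 1))`, and since `t ↦ t^s` permutes `F`, the sum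
over `t` is `q` or `0` according as `u ∈ R` or not.
-/

open Finset Function

section PowerMap

variable {F : Type*} [Field F] [Fintype F] {s : ℕ}

theorem pow_bijective_of_coprime_card_sub_one (hs0 : s ≠ 0)
    (hs : s.Coprime (Fintype.card F - 1)) : Bijective (· ^ s : F → F) := by
  classical
  have hunits : Bijective (· ^ s : Fˣ → Fˣ) :=
    Nat.Coprime.pow_left_bijective <| by
      rwa [Nat.card_eq_fintype_card, Fintype.card_units, Nat.coprime_comm]
  refine Finite.injective_iff_bijective.mp fun x y hxy => ?_
  rcases eq_or_ne x 0 with rfl | hx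
  · rw [zero_pow hs0, eq_comm, pow_eq_zero_iff hs0] at hxy
    exact hxy.symm
  rcases eq_or_ne y 0 with rfl | hy
  · rw [zero_pow hs0, pow_eq_zero_iff hs0] at hxy
    exact hxy
  have hxy' : Units.mk0 x hx ^ s = Units.mk0 y hy ^ s := Units.ext (by simpa using hxy)
  simpa using congrArg Units.val (hunits.injective hxy')

theorem neg_pow_of_coprime_card_sub_one (hs : s.Coprime (Fintype.card F - 1)) (t : F) :
    (-t) ^ s = -t ^ s := by
  by_cases h2 : ringChar F = 2
  · have := ringChar.of_eq h2
    rw [CharTwo.neg_eq, CharTwo.neg_eq]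
  · have heven : 2 ∣ Fintype.card F - 1 := by
      have := FiniteField.odd_card_of_char_ne_two h2
      omega
    exact (Nat.coprime_two_left.mp (Nat.Coprime.coprime_dvd_left heven hs.symm)).neg_pow t

theorem sum_comp_pow_add_sub_pow {M : Type*} [AddCommMonoid M] (g : F → M) (hs0 : s ≠ 0)
    (hneg : ∀ t : F, (-t) ^ s = -t ^ s) (t : F) :
    ∑ x, g (x ^ s + (t - x) ^ s - t ^ s) = ∑ u, g (t ^ s * ((1 - u) ^ s + u ^ s - 1)) := by
  rcases eq_or_ne t 0 with rfl | ht
  · simp [hneg, zero_pow hs0]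
  · refine (Fintype.sum_bijective (· * t) (Equiv.mulRight₀ t ht).bijective _ _ fun u => ?_).symm
    rw [show t - u * t = (1 - u) * t by ring, mul_pow, mul_pow]
    ring_nf

end PowerMap

namespace AddChar

variable {F R : Type*} [Field F] [Fintype F] [CommRing R] [IsDomain R]
  {ψ : AddChar F R} {s : ℕ}

def weilSum (ψ : AddChar F R) (s : ℕ) (a : F) : R := ∑ x, ψ (x ^ s - a * x)

theorem sum_weilSum_pow_three (hψ : ψ.IsPrimitive) :
    ∑ a, ψ.weilSum s a ^ 3 =
      Fintype.card F * ∑ x, ∑ y, ψ (x ^ s + y ^ s + (-(x + y)) ^ s) := by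
  classical
  have hcube (a : F) : ψ.weilSum s a ^ 3 =
      ∑ x, ∑ y, ∑ z, ψ (x ^ s + y ^ s + z ^ s) * ψ (a * -(x + y + z)) := by
    simp only [weilSum, pow_three, sum_mul, mul_sum]
    refine sum_congr rfl fun x _ => sum_congr rfl fun y _ => sum_congr rfl fun z _ => ?_
    simp only [← map_add_eq_mul]
    ring_nf
  have horth (x y : F) :
      ∑ z, ψ (x ^ s + y ^ s + z ^ s) * ∑ a, ψ (a * -(x + y + z)) =
        Fintype.card F * ψ (x ^ s + y ^ s + (-(x + y)) ^ s) := by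
    simp only [sum_mulShift _ hψ, neg_eq_zero, add_eq_zero_iff_eq_neg', Nat.cast_ite,
      Nat.cast_zero, mul_ite, mul_zero, sum_ite_eq', mem_univ, if_true]
    ring
  calc ∑ a, ψ.weilSum s a ^ 3
      = ∑ x, ∑ y, ∑ z, ∑ a, ψ (x ^ s + y ^ s + z ^ s) * ψ (a * -(x + y + z)) := by
        simp only [hcube]
        rw [sum_comm]
        refine sum_congr rfl fun x _ => ?_
        rw [sum_comm]
        exact sum_congr rfl fun y _ => sum_comm
    _ = ∑ x, ∑ y, Fintype.card F * ψ (x ^ s + y ^ s + (-(x + y)) ^ s) := by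
        simp only [← mul_sum, horth]
    _ = _ := by simp only [mul_sum]

theorem sum_apply_pow_mul [DecidableEq F] (hψ : ψ.IsPrimitive)
    (hbij : Bijective (· ^ s : F → F)) (c : F) :
    ∑ t, ψ (t ^ s * c) = if c = 0 then (Fintype.card F : R) else 0 := by
  rw [Fintype.sum_bijective _ hbij _ (fun t => ψ (t * c)) fun _ => rfl, sum_mulShift c hψ,
    Nat.cast_ite, Nat.cast_zero]

theorem sum_sum_apply_pow_add_pow_add_neg_add_pow (hψ : ψ.IsPrimitive) (hs0 : s ≠ 0)
    (hs : s.Coprime (Fintype.card F - 1)) :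
    ∑ x, ∑ y, ψ (x ^ s + y ^ s + (-(x + y)) ^ s) =
      Fintype.card F * Nat.card {u : F // (1 - u) ^ s + u ^ s = 1} := by
  classical
  have hneg := neg_pow_of_coprime_card_sub_one hs
  calc ∑ x, ∑ y, ψ (x ^ s + y ^ s + (-(x + y)) ^ s)
      = ∑ x, ∑ t, ψ (x ^ s + (t - x) ^ s - t ^ s) := by
        refine sum_congr rfl fun x _ =>
          Fintype.sum_bijective _ (Equiv.addLeft x).bijective _ _ fun y => ?_
        rw [Equiv.coe_addLeft, hneg, add_sub_cancel_left, sub_eq_add_neg]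
    _ = ∑ t, ∑ u, ψ (t ^ s * ((1 - u) ^ s + u ^ s - 1)) := by
        rw [sum_comm]
        exact sum_congr rfl fun t _ => sum_comp_pow_add_sub_pow _ hs0 hneg t
    _ = ∑ u : F, if (1 - u) ^ s + u ^ s = 1 then (Fintype.card F : R) else 0 := by
        rw [sum_comm]
        refine sum_congr rfl fun u _ => ?_
        rw [sum_apply_pow_mul hψ (pow_bijective_of_coprime_card_sub_one hs0 hs)]
        exact if_congr sub_eq_zero rfl rfl
    _ = _ := by
        rw [sum_ite, sum_const_zero, add_zero, sum_const, nsmul_eq_mul, mul_comm,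
          Nat.card_eq_fintype_card, Fintype.card_subtype]

theorem sum_weilSum_pow_three_eq (hψ : ψ.IsPrimitive) (hs0 : s ≠ 0)
    (hs : s.Coprime (Fintype.card F - 1)) :
    ∑ a, ψ.weilSum s a ^ 3 =
      Fintype.card F ^ 2 * Nat.card {u : F // (1 - u) ^ s + u ^ s = 1} := by
  rw [sum_weilSum_pow_three hψ, sum_sum_apply_pow_add_pow_add_neg_add_pow hψ hs0 hs, ← mul_assoc,
    sq]

end AddChar

noncomputable def traceAddChar (p : ℕ) [Fact p.Prime] (F : Type*) [Field F] [Algebra (ZMod p) F] :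
    AddChar F ℂ :=
  (AddChar.zmodChar p (Complex.isPrimitiveRoot_exp p (NeZero.ne p)).pow_eq_one).compAddMonoidHom
    (Algebra.trace (ZMod p) F).toAddMonoidHom

theorem traceAddChar_apply (p : ℕ) [Fact p.Prime] (F : Type*) [Field F] [Algebra (ZMod p) F]
    (x : F) : traceAddChar p F x =
      Complex.exp (2 * Real.pi * Complex.I * ((Algebra.trace (ZMod p) F x).val : ℂ) / p) := by
  rw [traceAddChar, AddChar.compAddMonoidHom_apply, AddChar.zmodChar_apply, ← Complex.exp_nat_mul,
    LinearMap.toAddMonoidHom_coe]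
  congr 1
  ring

theorem traceAddChar_isPrimitive (p : ℕ) [Fact p.Prime] (F : Type*) [Field F] [Finite F]
    [Algebra (ZMod p) F] : (traceAddChar p F).IsPrimitive := by
  refine AddChar.IsPrimitive.of_ne_one (AddChar.ne_one_iff.mpr ?_)
  obtain ⟨x, hx⟩ := Algebra.trace_surjective (ZMod p) F 1
  refine ⟨x, ?_⟩
  rw [traceAddChar, AddChar.compAddMonoidHom_apply, AddChar.zmodChar_apply,
    LinearMap.toAddMonoidHom_coe, hx, ZMod.val_one'' (Fact.out : p.Prime).ne_one, pow_one]
  exact (Complex.isPrimitiveRoot_exp p (NeZero.ne p)).ne_one (Fact.out : p.Prime).one_lt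

theorem weil_sum_third_power_moment_general (p n : ℕ) [Fact p.Prime] (F : Type) [Field F] [Fintype F]
    [Algebra (ZMod p) F] (hF : Fintype.card F = p ^ n) (s : ℕ) (hs0 : 0 < s)
    (hs : Nat.Coprime s (p ^ n - 1)) :
    ∑ a : F, (weilSum p F s a) ^ 3 =
      (p : ℂ) ^ (2 * n) * (Nat.card {x : F // (1 - x) ^ s + x ^ s = 1} : ℂ) := by
  have hW : weilSum p F s = (traceAddChar p F).weilSum s :=
    funext fun a => sum_congr rfl fun x _ => (traceAddChar_apply p F _).symm
  rw [hW, AddChar.sum_weilSum_pow_three_eq (traceAddChar_isPrimitive p F) hs0.ne' (hF ▸ hs), hF]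
  push_cast
  ring

/-- the third power moment `∑_{a ∈ F} W_{F,s}(a)^3 = p^{2n} · |R|`, where
`R = {x ∈ F : (1-x)^s + x^s = 1}`, with `s ≡ 1 (mod p-1)` so all values are integers. -/
theorem weil_sum_third_power_moment (p n : ℕ) [Fact p.Prime] (F : Type) [Field F] [Fintype F]
    [Algebra (ZMod p) F] (hF : Fintype.card F = p ^ n) (s : ℕ) (hs0 : 0 < s)
    (hs : Nat.Coprime s (p ^ n - 1)) (hs1 : s ≡ 1 [MOD p - 1]) :
    ∑ a : F, (weilSum p F s a) ^ 3 =
      (p : ℂ) ^ (2 * n) * (Nat.card {x : F // (1 - x) ^ s + x ^ s = 1} : ℂ) :=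
  weil_sum_third_power_moment_general p n F hF s hs0 hs
end

section
/- Let K_{a,s} = {x ∈ L^× : Tr_{L/F}(x^s - ax) = 0}. Then |K_{a,s}| is a multiple of p^n - 1, and W_{L,s}(a) = p^n · |K_{a,s}|/(p^n - 1) - p^n. In particular p^n divides W_{L,s}(a). -/
open scoped BigOperators

/-- Auxiliary: the main character-sum manipulation. -/
private theorem weil_aux_sum (F L : Type) [Field F] [Fintype F] [Field L] [Fintype L]
    [Algebra F L] (ψL : AddChar L ℂ) (ψF : AddChar F ℂ) (hψF : ψF.IsPrimitive)
    (f : L → L) (T : L → F) [DecidableEq F] [DecidableEq L]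
    (hscale : ∀ (c : F) (x : L), c ≠ 0 → ψL (f (algebraMap F L c * x)) = ψF (c * T x)) :
    ((Fintype.card F - 1 : ℕ) : ℂ) * ∑ x : L, ψL (f x)
      = (Fintype.card F : ℂ) * ((Finset.univ.filter fun x : L => T x = 0).card : ℂ)
        - (Fintype.card L : ℂ) := by
  classical
  have h1 : ∀ c : F, c ≠ 0 → ∑ x : L, ψL (f x) = ∑ x : L, ψF (c * T x) := by
    intro c hc
    have hbij : Function.Bijective (fun x : L => algebraMap F L c * x) := by
      have : IsUnit (algebraMap F L c) := (isUnit_iff_ne_zero).mpr (by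
        simpa using (map_ne_zero (algebraMap F L)).mpr hc)
      exact (Units.mulLeft_bijective this.unit)
    calc ∑ x : L, ψL (f x)
        = ∑ x : L, ψL (f (algebraMap F L c * x)) :=
          (Fintype.sum_bijective _ hbij _ _ fun x => rfl).symm
      _ = ∑ x : L, ψF (c * T x) := Finset.sum_congr rfl fun x _ => hscale c x hc
  calc ((Fintype.card F - 1 : ℕ) : ℂ) * ∑ x : L, ψL (f x)
      = ∑ c ∈ Finset.univ.erase (0 : F), ∑ x : L, ψL (f x) := by
        rw [Finset.sum_const, Finset.card_erase_of_mem (Finset.mem_univ _),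
          Finset.card_univ, nsmul_eq_mul]
    _ = ∑ c ∈ Finset.univ.erase (0 : F), ∑ x : L, ψF (c * T x) := by
        refine Finset.sum_congr rfl fun c hc => h1 c (Finset.ne_of_mem_erase hc)
    _ = ∑ x : L, ∑ c ∈ Finset.univ.erase (0 : F), ψF (c * T x) := Finset.sum_comm
    _ = ∑ x : L, ((if T x = 0 then (Fintype.card F : ℂ) else 0) - 1) := by
        refine Finset.sum_congr rfl fun x _ => ?_
        rw [Finset.sum_erase_eq_sub (Finset.mem_univ _), zero_mul,
          AddChar.map_zero_eq_one, AddChar.sum_mulShift _ hψF]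
        split_ifs <;> norm_num
    _ = _ := by
        rw [Finset.sum_sub_distrib, Finset.sum_const, Finset.sum_ite, Finset.sum_const,
          Finset.sum_const_zero, Finset.card_univ, add_zero, nsmul_eq_mul, nsmul_eq_mul,
          mul_comm, mul_one]

/-- Auxiliary: divisibility of the cardinality of an `F^×`-stable subset of `L^×`. -/
private theorem weil_aux_dvd (F L : Type) [Field F] [Fintype F] [Field L] [Fintype L]
    [Algebra F L] (T : L → F)
    (hTscale : ∀ (c : F) (z : L), T (algebraMap F L c * z) = c * T z) :
    (Fintype.card F - 1) ∣ Nat.card {x : L // x ≠ 0 ∧ T x = 0} := by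
  classical
  set U : Subgroup Lˣ := (Units.map (algebraMap F L).toMonoidHom).range with hU
  have hinj : Function.Injective (Units.map (algebraMap F L).toMonoidHom) :=
    Units.map_injective (algebraMap F L).injective
  have hcardU : Nat.card U = Fintype.card F - 1 := by
    rw [Nat.card_congr (MulEquiv.toEquiv (MonoidHom.ofInjective hinj)).symm,
      Nat.card_eq_fintype_card, Fintype.card_units]
  set S : Set Lˣ := {u : Lˣ | T ↑u = 0} with hS
  have hKS : Nat.card {x : L // x ≠ 0 ∧ T x = 0} = Nat.card S := by
    refine Nat.card_congr ⟨fun x => ⟨Units.mk0 x.1 x.2.1, by simpa [hS] using x.2.2⟩,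
      fun u => ⟨↑u.1, u.1.ne_zero, u.2⟩, fun x => by ext; simp, fun u => by ext; simp⟩
  have hSinv : QuotientGroup.mk ⁻¹' (QuotientGroup.mk '' S : Set (Lˣ ⧸ U)) = S := by
    apply Set.Subset.antisymm
    · rintro y hy
      obtain ⟨x, hxS, hxy⟩ := hy
      rw [QuotientGroup.eq] at hxy
      obtain ⟨c, hc⟩ := hxy
      have hy' : y = x * Units.map (algebraMap F L).toMonoidHom c := by
        rw [hc]; group
      have : (y : L) = algebraMap F L c * (x : L) := by
        rw [hy', Units.val_mul, Units.coe_map, mul_comm]; rfl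
      show T ↑y = 0
      rw [this, hTscale, hxS, mul_zero]
    · intro x hx
      exact ⟨x, hx, rfl⟩
  have hcount : Nat.card S = Nat.card U * Nat.card (QuotientGroup.mk '' S : Set (Lˣ ⧸ U)) := by
    have h2 := Nat.card_congr
      (QuotientGroup.preimageMkEquivSubgroupProdSet U (QuotientGroup.mk '' S))
    rw [hSinv, Nat.card_prod] at h2
    exact h2
  rw [hKS, hcount, hcardU]
  exact Dvd.intro _ rfl

/-- with `K_{a,s} = {x ∈ L^× : Tr_{L/F}(x^s - ax) = 0}`, the cardinality
`|K_{a,s}|` is a multiple of `p^n - 1`, and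
`W_{L,s}(a) = p^n · |K_{a,s}|/(p^n - 1) - p^n`; in particular `p^n ∣ W_{L,s}(a)`. -/
theorem weil_sum_via_trace_zero_set (p n : ℕ) [Fact p.Prime] (hn : 0 < n)
    (F L : Type) [Field F] [Fintype F] [Field L] [Fintype L]
    [Algebra (ZMod p) L] [Algebra F L]
    (hF : Fintype.card F = p ^ n) (hL : Fintype.card L = p ^ (2 * n))
    (s : ℕ) (hs0 : 0 < s) (hs : Nat.Coprime s (p ^ (2 * n) - 1))
    (hs1 : s ≡ 1 [MOD p ^ n - 1]) (a : L) :
    (p ^ n - 1) ∣ Nat.card {x : L // x ≠ 0 ∧ Algebra.trace F L (x ^ s - a * x) = 0} ∧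
    weilSum p L s a =
      (p : ℂ) ^ n * (Nat.card {x : L // x ≠ 0 ∧ Algebra.trace F L (x ^ s - a * x) = 0} : ℂ)
        / ((p : ℂ) ^ n - 1) - (p : ℂ) ^ n ∧
    ∃ m : ℤ, weilSum p L s a = ((p : ℤ) ^ n * m : ℤ) := by
  classical
  have hp : p.Prime := Fact.out
  haveI : CharP L p := charP_of_injective_ringHom (algebraMap (ZMod p) L).injective p
  have hring : ringChar F = p := by
    haveI : CharP L (ringChar F) := charP_of_injective_ringHom (algebraMap F L).injective _
    exact CharP.eq L this ‹CharP L p›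
  haveI : CharP F p := hring ▸ ringChar.charP F
  letI : Algebra (ZMod p) F := ZMod.algebra F p
  haveI : IsScalarTower (ZMod p) F L := IsScalarTower.of_algebraMap_eq' (Subsingleton.elim _ _)
  -- the additive characters
  have prim := Complex.isPrimitiveRoot_exp p hp.ne_zero
  set ζ : ℂ := Complex.exp (2 * Real.pi * Complex.I / p) with hζdef
  have hζp : ζ ^ p = 1 := prim.pow_eq_one
  let e : AddChar (ZMod p) ℂ := AddChar.zmodChar p hζp
  have he_prim : e.IsPrimitive := AddChar.zmodChar_primitive_of_primitive_root p prim
  let ψL : AddChar L ℂ := e.compAddMonoidHom (Algebra.trace (ZMod p) L).toAddMonoidHom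
  let ψF : AddChar F ℂ := e.compAddMonoidHom (Algebra.trace (ZMod p) F).toAddMonoidHom
  have hψF_ne : ψF ≠ 1 := by
    obtain ⟨b, hb⟩ := Algebra.trace_surjective (ZMod p) F 1
    refine AddChar.ne_one_iff.mpr ⟨b, ?_⟩
    show e (Algebra.trace (ZMod p) F b) ≠ 1
    rw [hb]
    intro h
    exact one_ne_zero ((he_prim.zmod_char_eq_one_iff p (1 : ZMod p)).mp h)
  have hψF_prim : ψF.IsPrimitive := AddChar.IsPrimitive.of_ne_one hψF_ne
  -- notation
  set T : L → F := fun x => Algebra.trace F L (x ^ s - a * x) with hTdef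
  set W : ℂ := weilSum p L s a with hWdef
  set NK : ℕ := Nat.card {x : L // x ≠ 0 ∧ Algebra.trace F L (x ^ s - a * x) = 0} with hNKdef
  -- the Weil sum as a character sum
  have hW : W = ∑ x : L, ψL (x ^ s - a * x) := by
    rw [hWdef]
    unfold weilSum
    refine Finset.sum_congr rfl fun x _ => ?_
    show _ = e (Algebra.trace (ZMod p) L (x ^ s - a * x))
    rw [AddChar.zmodChar_apply, hζdef, ← Complex.exp_nat_mul]
    congr 1
    ring
  -- scaling properties
  have hcs : ∀ c : F, c ^ s = c := by
    intro c
    rcases eq_or_ne c 0 with rfl | hc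
    · simp [zero_pow hs0.ne']
    · obtain ⟨k, hk⟩ := (Nat.modEq_iff_dvd' hs0).mp hs1.symm
      have hsk : s = 1 + (p ^ n - 1) * k := by omega
      rw [hsk, pow_add, pow_one, pow_mul, ← hF, FiniteField.pow_card_sub_one_eq_one c hc,
        one_pow, mul_one]
  have hfscale : ∀ (c : F) (x : L),
      (algebraMap F L c * x) ^ s - a * (algebraMap F L c * x)
        = algebraMap F L c * (x ^ s - a * x) := by
    intro c x
    rw [mul_pow, ← map_pow, hcs c]
    ring
  have hTlin : ∀ (c : F) (z : L),
      Algebra.trace F L (algebraMap F L c * z) = c * Algebra.trace F L z := by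
    intro c z
    rw [← Algebra.smul_def, map_smul, smul_eq_mul]
  have hTscale : ∀ (c : F) (z : L), T (algebraMap F L c * z) = c * T z := by
    intro c z
    rw [hTdef]
    simp only
    rw [hfscale, hTlin]
  have htrace : ∀ (c : F) (y : L),
      Algebra.trace (ZMod p) L (algebraMap F L c * y)
        = Algebra.trace (ZMod p) F (c * Algebra.trace F L y) := by
    intro c y
    rw [← Algebra.trace_trace (S := F), hTlin]
  -- the main sum identity
  have hscale : ∀ (c : F) (x : L), c ≠ 0 →
      ψL ((fun x => x ^ s - a * x) (algebraMap F L c * x)) = ψF (c * T x) := by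
    intro c x _
    show e (Algebra.trace (ZMod p) L
        (((algebraMap F L) c * x) ^ s - a * ((algebraMap F L) c * x)))
      = e (Algebra.trace (ZMod p) F (c * Algebra.trace F L (x ^ s - a * x)))
    rw [hfscale, htrace]
  have main := weil_aux_sum F L ψL ψF hψF_prim (fun x => x ^ s - a * x) T hscale
  rw [← hW] at main
  -- counting : the filter has NK + 1 elements
  have hT0 : T 0 = 0 := by
    rw [hTdef]
    simp [zero_pow hs0.ne']
  have hNKcard : NK = (Finset.univ.filter fun x : L => x ≠ 0 ∧ T x = 0).card := by
    rw [hNKdef, Nat.card_eq_fintype_card, Fintype.card_subtype]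
  have hfilter : (Finset.univ.filter fun x : L => T x = 0)
      = insert 0 (Finset.univ.filter fun x : L => x ≠ 0 ∧ T x = 0) := by
    ext x
    simp only [Finset.mem_filter, Finset.mem_univ, true_and, Finset.mem_insert]
    constructor
    · intro hx
      rcases eq_or_ne x 0 with rfl | hx0
      · exact Or.inl rfl
      · exact Or.inr ⟨hx0, hx⟩
    · rintro (rfl | ⟨-, hx⟩)
      · exact hT0
      · exact hx
  have hN0 : ((Finset.univ.filter fun x : L => T x = 0).card : ℕ) = NK + 1 := by
    rw [hfilter, Finset.card_insert_of_notMem (by simp), hNKcard]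
  rw [hN0] at main
  -- cast bookkeeping
  set Q : ℂ := (p : ℂ) ^ n with hQdef
  have hq1 : 1 < p ^ n := Nat.one_lt_pow hn.ne' hp.one_lt
  have hcardF : (Fintype.card F : ℂ) = Q := by rw [hF]; push_cast; rfl
  have hcardF1 : ((Fintype.card F - 1 : ℕ) : ℂ) = Q - 1 := by
    rw [hF, Nat.cast_sub hq1.le]
    push_cast
    rfl
  have hcardL : (Fintype.card L : ℂ) = Q ^ 2 := by
    rw [hL, hQdef]
    push_cast
    rw [two_mul, pow_add]
    ring
  rw [hcardF, hcardF1, hcardL] at main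
  push_cast at main
  -- main is now : (Q - 1) * W = Q * (NK + 1) - Q ^ 2
  have hQ1 : Q - 1 ≠ 0 := by
    rw [hQdef]
    have : ((p : ℂ) ^ n) ≠ 1 := by exact_mod_cast hq1.ne'
    exact sub_ne_zero.mpr this
  -- divisibility
  have hdvd : (p ^ n - 1) ∣ NK := by
    rw [hNKdef, ← hF]
    exact weil_aux_dvd F L T hTscale
  obtain ⟨N, hN⟩ := hdvd
  have hNcast : (NK : ℂ) = (Q - 1) * N := by
    rw [hN]
    push_cast [Nat.cast_sub hq1.le]
    try rw [hQdef]
    try push_cast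
    try ring
  refine ⟨⟨N, hN⟩, ?_, ?_⟩
  · -- W = Q * NK / (Q - 1) - Q
    show W = Q * (NK : ℂ) / (Q - 1) - Q
    field_simp
    linear_combination main
  · -- ∃ m, W = p^n * m
    refine ⟨(N : ℤ) - 1, ?_⟩
    have hWN : W = Q * N - Q := by
      have h2 : (Q - 1) * W = (Q - 1) * (Q * N - Q) := by
        rw [main, hNcast]
        ring
      exact mul_left_cancel₀ hQ1 h2
    rw [hWN, hQdef]
    push_cast
    ring
end

section
/- Let p be odd, L a quadratic extension of F with |F| = p^n, s = 1 + k(p^n - 1) coprime to p^{2n}-1. If a ∈ F, x ∈ L satisfies x^{2(p^n-1)} = 1 and x ∉ F, then Tr_{L/F}(x^s - ax) = 0. -/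
open scoped BigOperators

open Polynomial in
/-- If `y^|F| = y` in a finite extension `L` of `F`, then `y` comes from `F`. -/
lemma mem_range_of_pow_card_eq (F L : Type) [Field F] [Fintype F] [Field L] [Fintype L]
    [Algebra F L] (y : L) (hy : y ^ Fintype.card F = y) :
    y ∈ Set.range (algebraMap F L) := by
  classical
  set q := Fintype.card F with hq
  by_contra hy'
  set S : Finset L := Finset.univ.image (algebraMap F L) with hS
  have hcardS : S.card = q := by
    rw [hS, Finset.card_image_of_injective _ (algebraMap F L).injective, Finset.card_univ]
  have hne : (X ^ q - X : L[X]) ≠ 0 :=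
    FiniteField.X_pow_card_sub_X_ne_zero L Fintype.one_lt_card
  have hdeg : (X ^ q - X : L[X]).natDegree = q :=
    FiniteField.X_pow_card_sub_X_natDegree_eq L Fintype.one_lt_card
  have hsub : insert y S ⊆ (X ^ q - X : L[X]).roots.toFinset := by
    intro z hz
    rw [Multiset.mem_toFinset, mem_roots hne]
    have hzq : z ^ q = z := by
      rcases Finset.mem_insert.mp hz with rfl | hzS
      · exact hy
      · obtain ⟨w, _, rfl⟩ := Finset.mem_image.mp hzS
        rw [← map_pow, FiniteField.pow_card]
    simp [IsRoot, hzq]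
  have hyS : y ∉ S := by
    intro h
    obtain ⟨w, _, rfl⟩ := Finset.mem_image.mp h
    exact hy' ⟨w, rfl⟩
  have h1 : q + 1 ≤ (X ^ q - X : L[X]).roots.toFinset.card := by
    calc q + 1 = (insert y S).card := by rw [Finset.card_insert_of_notMem hyS, hcardS]
    _ ≤ _ := Finset.card_le_card hsub
  have h2 : (X ^ q - X : L[X]).roots.toFinset.card ≤ q := by
    calc (X ^ q - X : L[X]).roots.toFinset.card ≤ Multiset.card (X ^ q - X : L[X]).roots :=
      (X ^ q - X : L[X]).roots.toFinset_card_le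
    _ ≤ (X ^ q - X : L[X]).natDegree := card_roots' _
    _ = q := hdeg
  omega

/-- for `p` odd, `s = 1 + k(p^n - 1)` coprime to `p^{2n}-1`, `a ∈ F`,
if `x^{2(p^n-1)} = 1` and `x ∉ F`, then `Tr_{L/F}(x^s - ax) = 0`. -/
theorem trace_zero_of_two_torsion (p n : ℕ) [Fact p.Prime] (hp : Odd p) (hn : 0 < n)
    (F L : Type) [Field F] [Fintype F] [Field L] [Fintype L] [Algebra F L]
    (hF : Fintype.card F = p ^ n) (hL : Fintype.card L = p ^ (2 * n))
    (k s : ℕ) (hsk : s = 1 + k * (p ^ n - 1)) (hs : Nat.Coprime s (p ^ (2 * n) - 1))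
    (a : F) (x : L) (hx : x ^ (2 * (p ^ n - 1)) = 1)
    (hxF : x ∉ Set.range (algebraMap F L)) :
    Algebra.trace F L (x ^ s - algebraMap F L a * x) = 0 := by
  classical
  have hppos : 1 < p := (Fact.out : p.Prime).one_lt
  have hq1 : 1 < p ^ n := Nat.one_lt_pow hn.ne' hppos
  -- x^(q-1) = -1
  have hsq : (x ^ (p ^ n - 1)) * (x ^ (p ^ n - 1)) = 1 := by
    rw [← pow_add, ← two_mul, hx]
  have hx1 : x ^ (p ^ n - 1) = -1 := by
    rcases mul_self_eq_one_iff.mp hsq with h | h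
    · exfalso
      apply hxF
      apply mem_range_of_pow_card_eq
      rw [hF]
      calc x ^ p ^ n = x ^ (p ^ n - 1) * x ^ 1 := by rw [← pow_add]; congr 1; omega
      _ = x := by rw [h, one_mul, pow_one]
    · exact h
  -- x ≠ 0
  have hx0 : x ≠ 0 := by
    intro h
    rw [h, zero_pow (by omega)] at hx
    exact one_ne_zero hx.symm
  -- finrank = 2
  have hrank : Module.finrank F L = 2 := by
    have := Module.card_eq_pow_finrank (K := F) (V := L)
    rw [hF, hL, ← pow_mul] at this
    have h2 := Nat.pow_right_injective hppos this
    have h3 : n * 2 = n * Module.finrank F L := by omega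
    exact (Nat.eq_of_mul_eq_mul_left hn h3).symm
  -- x^2 comes from F
  obtain ⟨c, hc⟩ : x ^ 2 ∈ Set.range (algebraMap F L) := by
    apply mem_range_of_pow_card_eq
    rw [hF]
    calc (x ^ 2) ^ p ^ n = (x ^ 2) ^ (p ^ n - 1) * (x ^ 2) ^ 1 := by
          rw [← pow_add]; congr 1; omega
    _ = x ^ 2 := by
          rw [← pow_mul, mul_comm 2, pow_mul, hx1, pow_one, neg_one_sq, one_mul]
  -- basis {1, x}
  have hli : LinearIndependent F ![(1 : L), x] := by
    rw [LinearIndependent.pair_iff' one_ne_zero]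
    intro t ht
    exact hxF ⟨t, by rw [Algebra.algebraMap_eq_smul_one, ht]⟩
  let B := basisOfLinearIndependentOfCardEqFinrank hli (by simp [hrank])
  have hB : ⇑B = ![(1 : L), x] := coe_basisOfLinearIndependentOfCardEqFinrank ..
  -- trace of x is 0
  have htrx : Algebra.trace F L x = 0 := by
    rw [Algebra.trace_eq_matrix_trace B, Matrix.trace]
    have h0 : x * B 0 = B 1 := by rw [hB]; simp
    have h1 : x * B 1 = c • B 0 := by
      rw [hB]
      simp only [Matrix.cons_val_one, Matrix.head_cons, Matrix.cons_val_zero]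
      rw [← sq, ← hc, Algebra.smul_def, mul_one]
    have e0 : Algebra.leftMulMatrix B x 0 0 = 0 := by
      rw [Algebra.leftMulMatrix_eq_repr_mul, h0, B.repr_self]
      simp [Finsupp.single_apply]
    have e1 : Algebra.leftMulMatrix B x 1 1 = 0 := by
      rw [Algebra.leftMulMatrix_eq_repr_mul, h1, map_smul, B.repr_self]
      simp [Finsupp.single_apply]
    rw [Fin.sum_univ_two]
    simp only [Matrix.diag_apply]
    rw [e0, e1, add_zero]
  -- x^s = (-1)^k • x, and conclude
  have hxs : x ^ s - algebraMap F L a * x = ((-1 : F) ^ k - a) • x := by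
    have : x ^ s = ((-1 : F) ^ k) • x := by
      rw [hsk, pow_add, pow_one, mul_comm k, pow_mul, hx1, Algebra.smul_def, map_pow, map_neg,
        map_one]
      ring
    rw [this, sub_smul, Algebra.smul_def, Algebra.smul_def]
  rw [hxs, map_smul, htrx, smul_zero]
end

section
/- Let p^n ≡ 2 (mod 3), L the quadratic extension of F with |F| = p^n, and s = 1 + k(p^n-1) coprime to p^{2n}-1. If x ∈ L satisfies x^{3(p^n-1)} = 1, then Tr_{L/F}(x^s - x) = 0. -/
open scoped BigOperators

/-!
Put `q = |F|` and `y = x^(q-1)`, a cube root of unity. Since `q ≡ 2 (mod 3)` we have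
`x^q = x y`, `y^q = y²` and `x^s = x y^k`, so `Tr(x^s - x) = x (y^k + y^(2k+1) - 1 - y)`.
This vanishes for `k ≡ 0, 1 (mod 3)`, and `k ≡ 2` is excluded because it makes `3`
divide both `s` and `q² - 1`.
-/

theorem Nat.mod_three_ne_two_of_coprime {q k : ℕ} (hq : q % 3 = 2)
    (hs : Nat.Coprime (1 + k * (q - 1)) (q ^ 2 - 1)) : k % 3 ≠ 2 := by
  intro hk
  have hs3 : 3 ∣ 1 + k * (q - 1) := by
    have : (q - 1) % 3 = 1 := by omega
    rw [Nat.dvd_iff_mod_eq_zero, Nat.add_mod, Nat.mul_mod, hk, this]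
  have hq3 : 3 ∣ q ^ 2 - 1 := by
    have : q ^ 2 % 3 = 1 := by rw [Nat.pow_mod, hq]
    omega
  have := Nat.dvd_gcd hs3 hq3
  rw [hs] at this
  omega

theorem pow_add_pow_two_mul_add_one_of_pow_three_eq_one {R : Type*} [Semiring R]
    {y : R} (hy : y ^ 3 = 1) {k : ℕ} (hk : k % 3 ≠ 2) :
    y ^ k + y ^ (2 * k + 1) = 1 + y := by
  rw [pow_eq_pow_mod k hy, pow_eq_pow_mod (2 * k + 1) hy]
  rcases (by omega : k % 3 = 0 ∨ k % 3 = 1) with hk | hk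
  · rw [hk, show (2 * k + 1) % 3 = 1 by omega, pow_zero, pow_one]
  · rw [hk, show (2 * k + 1) % 3 = 0 by omega, pow_zero, pow_one, add_comm]

namespace FiniteField

variable {K : Type*} [Field K] [Fintype K]

theorem finrank_eq_two_of_card_eq_sq {L : Type*} [Field L] [Fintype L] [Algebra K L]
    (hL : Fintype.card L = Fintype.card K ^ 2) : Module.finrank K L = 2 :=
  Nat.pow_right_injective Fintype.one_lt_card (Module.card_eq_pow_finrank.symm.trans hL)

theorem algebraMap_trace_eq_add_pow_card {L : Type*} [Field L] [Finite L] [Algebra K L]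
    (hKL : Module.finrank K L = 2) (z : L) :
    algebraMap K L (Algebra.trace K L z) = z + z ^ Fintype.card K := by
  rw [algebraMap_trace_eq_sum_pow, hKL, Finset.sum_range_succ, Finset.sum_range_one,
    Nat.card_eq_fintype_card, pow_zero, pow_one, pow_one]

theorem pow_sub_self_add_pow_card_eq_zero {R : Type*} [CommRing R] [Algebra K R] {x : R}
    {k : ℕ} (hq : Fintype.card K % 3 = 2) (hk : k % 3 ≠ 2)
    (hx : x ^ (3 * (Fintype.card K - 1)) = 1) :
    x ^ (1 + k * (Fintype.card K - 1)) - x +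
      (x ^ (1 + k * (Fintype.card K - 1)) - x) ^ Fintype.card K = 0 := by
  set q := Fintype.card K
  set y := x ^ (q - 1)
  have hy3 : y ^ 3 = 1 := by rw [← pow_mul, mul_comm, hx]
  have hxq : x ^ q = x * y := by
    rw [← pow_succ', Nat.sub_add_cancel Fintype.card_pos]
  have hyq : y ^ q = y ^ 2 := by rw [pow_eq_pow_mod q hy3, hq]
  have hxs : x ^ (1 + k * (q - 1)) = x * y ^ k := by rw [pow_add, pow_one, mul_comm k, pow_mul]
  have hzq : (x ^ (1 + k * (q - 1)) - x) ^ q = x * y * y ^ (2 * k) - x * y := by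
    have := map_sub (frobeniusAlgHom K R) (x ^ (1 + k * (q - 1))) x
    simp only [coe_frobeniusAlgHom] at this
    rw [this, hxs, mul_pow, hxq, ← pow_mul, mul_comm k, pow_mul, hyq, ← pow_mul]
  calc _ = x * (y ^ k + y ^ (2 * k + 1)) - x * (1 + y) := by rw [hzq, hxs]; ring
    _ = 0 := by rw [pow_add_pow_two_mul_add_one_of_pow_three_eq_one hy3 hk, sub_self]

end FiniteField

theorem trace_zero_of_three_torsion_general (p n : ℕ)
    (F L : Type) [Field F] [Fintype F] [Field L] [Fintype L] [Algebra F L]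
    (hF : Fintype.card F = p ^ n) (hL : Fintype.card L = p ^ (2 * n))
    (hp3 : p ^ n % 3 = 2)
    (k s : ℕ) (hsk : s = 1 + k * (p ^ n - 1)) (hs : Nat.Coprime s (p ^ (2 * n) - 1))
    (x : L) (hx : x ^ (3 * (p ^ n - 1)) = 1) :
    Algebra.trace F L (x ^ s - x) = 0 := by
  rw [pow_mul', ← hF] at hL hs
  rw [← hF] at hp3 hsk hx
  subst hsk
  have hk := Nat.mod_three_ne_two_of_coprime hp3 hs
  apply FaithfulSMul.algebraMap_injective F L
  rw [map_zero, FiniteField.algebraMap_trace_eq_add_pow_card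
    (FiniteField.finrank_eq_two_of_card_eq_sq hL)]
  exact FiniteField.pow_sub_self_add_pow_card_eq_zero hp3 hk hx

/-- if `p^n ≡ 2 (mod 3)`, `s = 1 + k(p^n-1)` coprime to `p^{2n}-1`, and
`x^{3(p^n-1)} = 1`, then `Tr_{L/F}(x^s - x) = 0`. -/
theorem trace_zero_of_three_torsion (p n : ℕ) [Fact p.Prime] (hn : 0 < n)
    (F L : Type) [Field F] [Fintype F] [Field L] [Fintype L] [Algebra F L]
    (hF : Fintype.card F = p ^ n) (hL : Fintype.card L = p ^ (2 * n))
    (hp3 : p ^ n % 3 = 2)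
    (k s : ℕ) (hsk : s = 1 + k * (p ^ n - 1)) (hs : Nat.Coprime s (p ^ (2 * n) - 1))
    (x : L) (hx : x ^ (3 * (p ^ n - 1)) = 1) :
    Algebra.trace F L (x ^ s - x) = 0 :=
  trace_zero_of_three_torsion_general p n F L hF hL hp3 k s hsk hs x hx
end

section
/- For p odd and s an invertible Niho exponent over L (the quadratic extension of F, |F| = p^n), W_{L,s}(a) ≥ -p^n for all a ∈ L. -/
open scoped BigOperators

/-!
Write `q = |F|` and `μ` for the canonical additive character. For `c ∈ Fˣ` we have `c ^ s = c`,
so the substitution `x ↦ c x` gives `W(a) = ∑ₓ μ(c (x ^ s - a x))`. Summing over all `c ∈ F` and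
using that `∑_{c ∈ F} μ(c t)` is `q` or `0` according as `Tr_{L/F}(t)` vanishes or not yields
`(q - 1) W(a) + q² = q N`, where `N ≥ 1` counts the zeros of `x ↦ Tr_{L/F}(x ^ s - a x)`.
Being a sum of roots of unity, the rational number `W(a)` is an integer, and `N ≥ 1` gives
`W(a) ≥ -q`.
-/

open Finset

lemma AddChar.isIntegral_int_apply {G : Type*} [AddGroup G] [Finite G] (ψ : AddChar G ℂ)
    (x : G) : IsIntegral ℤ (ψ x) := by
  refine IsIntegral.of_pow (Nat.card_pos (α := G)) ?_
  rw [← map_nsmul_eq_pow, card_nsmul_eq_zero', map_zero_eq_one]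
  exact isIntegral_one

lemma Complex.exists_int_eq_of_isIntegral_of_mul_eq {z : ℂ} (hz : IsIntegral ℤ z) {d b : ℤ}
    (hd : d ≠ 0) (h : d * z = b) : ∃ m : ℤ, z = m := by
  have hzq : z = ((b / d : ℚ) : ℂ) := by
    push_cast
    rw [eq_div_iff (by exact_mod_cast hd), mul_comm, h]
  rw [hzq, ← eq_ratCast (algebraMap ℚ ℂ),
    isIntegral_algebraMap_iff (algebraMap ℚ ℂ).injective] at hz
  obtain ⟨m, hm⟩ := IsIntegrallyClosed.isIntegral_iff.mp hz
  exact ⟨m, by rw [hzq, ← hm]; simp⟩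

/-- The canonical additive character `μ = ζ_p ^ Tr_{K/𝔽_p}`. -/
noncomputable def traceChar (p : ℕ) [NeZero p] (K : Type*) [Field K] [Algebra (ZMod p) K] :
    AddChar K ℂ :=
  ZMod.stdAddChar.compAddMonoidHom (Algebra.trace (ZMod p) K).toAddMonoidHom

lemma weilSum_eq_sum_traceChar {p : ℕ} [NeZero p] (L : Type) [Field L] [Fintype L]
    [Algebra (ZMod p) L] (s : ℕ) (a : L) :
    weilSum p L s a = ∑ x : L, traceChar p L (x ^ s - a * x) := by
  simp [weilSum, traceChar, ZMod.stdAddChar_apply, ZMod.toCircle_apply]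

section traceChar

variable {p : ℕ} [Fact p.Prime]

lemma traceChar_isPrimitive (K : Type*) [Field K] [Finite K] [Algebra (ZMod p) K] :
    (traceChar p K).IsPrimitive := by
  refine AddChar.IsPrimitive.of_ne_one (AddChar.ne_one_iff.mpr ?_)
  obtain ⟨x, hx⟩ := Algebra.trace_surjective (ZMod p) K 1
  refine ⟨x, fun h => one_ne_zero (ZMod.injective_stdAddChar ?_ : (1 : ZMod p) = 0)⟩
  simpa [traceChar, hx] using h

variable (F L : Type*) [Field F] [Field L] [Algebra F L] [FiniteDimensional F L]
  [Algebra (ZMod p) F] [Algebra (ZMod p) L] [IsScalarTower (ZMod p) F L]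

lemma traceChar_trace [Finite F] (x : L) :
    traceChar p F (Algebra.trace F L x) = traceChar p L x := by
  have : FiniteDimensional (ZMod p) F := Module.Finite.of_finite
  simp [traceChar, Algebra.trace_trace]

lemma sum_traceChar_algebraMap_mul [Fintype F] [DecidableEq F] (t : L) :
    ∑ c : F, traceChar p L (algebraMap F L c * t) =
      if Algebra.trace F L t = 0 then (Fintype.card F : ℂ) else 0 := by
  have hc (c : F) : traceChar p L (algebraMap F L c * t) =
      traceChar p F (c * Algebra.trace F L t) := by
    rw [← traceChar_trace F L, ← Algebra.smul_def, map_smul, smul_eq_mul]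
  simp only [hc, AddChar.sum_mulShift _ (traceChar_isPrimitive F), apply_ite Nat.cast,
    Nat.cast_zero]

end traceChar

lemma FiniteField.pow_one_add_mul_card_sub_one {K : Type*} [GroupWithZero K] [Fintype K]
    (c : K) (k : ℕ) : c ^ (1 + k * (Fintype.card K - 1)) = c := by
  induction k with
  | zero => simp
  | succ k ih =>
    have hq : 1 ≤ Fintype.card K := Fintype.card_pos
    rw [add_one_mul, ← add_assoc, pow_add, ih, ← pow_succ', Nat.sub_add_cancel hq,
      FiniteField.pow_card]

section niho

variable {p : ℕ} (F : Type*) {L : Type} [Field F] [Fintype F] [Field L] [Fintype L]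
  [Algebra F L] [Algebra (ZMod p) L] {k s : ℕ} (a : L)

lemma weilSum_eq_sum_traceChar_algebraMap_mul [NeZero p]
    (hs : s = 1 + k * (Fintype.card F - 1)) {c : F} (hc : c ≠ 0) :
    weilSum p L s a = ∑ x : L, traceChar p L (algebraMap F L c * (x ^ s - a * x)) := by
  have hcs : algebraMap F L c ^ s = algebraMap F L c := by
    rw [← map_pow, hs, FiniteField.pow_one_add_mul_card_sub_one]
  rw [weilSum_eq_sum_traceChar]
  refine (Fintype.sum_bijective _ (mulLeft_bijective₀ _ ((map_ne_zero (algebraMap F L)).mpr hc))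
    _ _ fun x => ?_).symm
  rw [mul_pow, hcs, mul_sub, mul_left_comm]

lemma card_sub_one_mul_weilSum_add_card [Fact p.Prime] [Algebra (ZMod p) F]
    [IsScalarTower (ZMod p) F L] [DecidableEq F] (hs : s = 1 + k * (Fintype.card F - 1)) :
    ((Fintype.card F : ℂ) - 1) * weilSum p L s a + Fintype.card L =
      Fintype.card F * #{x | Algebra.trace F L (x ^ s - a * x) = 0} := by
  calc ((Fintype.card F : ℂ) - 1) * weilSum p L s a + Fintype.card L
      = ∑ c : F, ∑ x : L, traceChar p L (algebraMap F L c * (x ^ s - a * x)) := by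
        rw [Fintype.sum_eq_add_sum_compl 0, add_comm]
        simp only [map_zero, zero_mul, AddChar.map_zero_eq_one, sum_const, card_univ,
          nsmul_one]
        have hW : ∀ c ∈ ({0}ᶜ : Finset F),
            ∑ x : L, traceChar p L (algebraMap F L c * (x ^ s - a * x)) = weilSum p L s a :=
          fun c hc => (weilSum_eq_sum_traceChar_algebraMap_mul F a hs (by simpa using hc)).symm
        rw [sum_congr rfl hW, sum_const, card_compl, card_singleton, nsmul_eq_mul,
          Nat.cast_pred Fintype.card_pos]
    _ = ∑ x : L, ∑ c : F, traceChar p L (algebraMap F L c * (x ^ s - a * x)) := sum_comm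
    _ = Fintype.card F * #{x | Algebra.trace F L (x ^ s - a * x) = 0} := by
        simp only [sum_traceChar_algebraMap_mul]
        rw [sum_ite, sum_const_zero, add_zero, sum_const, nsmul_eq_mul, mul_comm]

end niho

lemma exists_int_eq_weilSum_and_neg_card_le {p : ℕ} [Fact p.Prime] (F : Type*) {L : Type}
    [Field F] [Fintype F] [Field L] [Fintype L] [Algebra F L] [Algebra (ZMod p) F]
    [Algebra (ZMod p) L] [IsScalarTower (ZMod p) F L] (hL : Fintype.card L = Fintype.card F ^ 2)
    {k s : ℕ} (hs : s = 1 + k * (Fintype.card F - 1)) (a : L) :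
    ∃ m : ℤ, weilSum p L s a = m ∧ -(Fintype.card F : ℤ) ≤ m := by
  classical
  have key := card_sub_one_mul_weilSum_add_card (p := p) F a hs
  have hint : IsIntegral ℤ (weilSum p L s a) := by
    rw [weilSum_eq_sum_traceChar]
    exact IsIntegral.sum _ fun x _ => AddChar.isIntegral_int_apply _ _
  rw [hL] at key
  set q := Fintype.card F
  set N := #{x : L | Algebra.trace F L (x ^ s - a * x) = 0}
  have hq : 1 < q := Fintype.one_lt_card
  have hN : 1 ≤ N := card_pos.mpr ⟨0, by simp [zero_pow (show s ≠ 0 by omega)]⟩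
  obtain ⟨m, hm⟩ := Complex.exists_int_eq_of_isIntegral_of_mul_eq hint
    (d := q - 1) (b := q * N - q ^ 2) (by omega) (by push_cast at key ⊢; linear_combination key)
  refine ⟨m, hm, le_of_mul_le_mul_left ?_ (by omega : (0 : ℤ) < q - 1)⟩
  have hmN : ((q : ℤ) - 1) * m = q * N - q ^ 2 := by
    rw [hm] at key
    push_cast at key
    exact_mod_cast (by linear_combination key : ((q : ℂ) - 1) * m = q * N - q ^ 2)
  nlinarith

theorem weil_sum_lower_bound_general (p n : ℕ) [Fact p.Prime]
    (F L : Type) [Field F] [Fintype F] [Field L] [Fintype L]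
    [Algebra (ZMod p) L] [Algebra F L]
    (hF : Fintype.card F = p ^ n) (hL : Fintype.card L = p ^ (2 * n))
    (k s : ℕ) (hsk : s = 1 + k * (p ^ n - 1)) (a : L) :
    ∃ m : ℤ, weilSum p L s a = (m : ℂ) ∧ -((p : ℤ) ^ n) ≤ m := by
  have : CharP L p := charP_of_injective_algebraMap (algebraMap (ZMod p) L).injective p
  have : CharP F p := (algebraMap F L).charP (algebraMap F L).injective p
  let _ := ZMod.algebra F p
  have : IsScalarTower (ZMod p) F L := .of_algebraMap_eq' (RingHom.ext_zmod _ _)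
  have hLF : Fintype.card L = Fintype.card F ^ 2 := by rw [hL, hF, pow_mul']
  obtain ⟨m, hm, hle⟩ := exists_int_eq_weilSum_and_neg_card_le (p := p) F hLF (hF ▸ hsk) a
  refine ⟨m, hm, ?_⟩
  rw [hF] at hle
  exact_mod_cast hle

/-- for `p` odd and `s` an invertible Niho exponent over `L`,
`W_{L,s}(a)` is a rational integer `≥ -p^n` for all `a ∈ L`. -/
theorem weil_sum_lower_bound (p n : ℕ) [Fact p.Prime] (hn : 0 < n)
    (F L : Type) [Field F] [Fintype F] [Field L] [Fintype L]
    [Algebra (ZMod p) L] [Algebra F L]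
    (hF : Fintype.card F = p ^ n) (hL : Fintype.card L = p ^ (2 * n))
    (k s : ℕ) (hsk : s = 1 + k * (p ^ n - 1)) (hs : Nat.Coprime s (p ^ (2 * n) - 1))
    (hp : Odd p) (a : L) :
    ∃ m : ℤ, weilSum p L s a = (m : ℂ) ∧ -((p : ℤ) ^ n) ≤ m :=
  weil_sum_lower_bound_general p n F L hF hL k s hsk a
end

section
/- W_{L,s}(1) = p^n(d_1 + d_2 - 2), where d_1 = gcd(k, p^n+1) and d_2 = gcd(k-1, p^n+1). -/
/-!
Write `q = p^n = #F`, so that `L/F` is a quadratic extension with `Tr_{L/F}(y) = y + y^q`.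
Since `t^s = t` for `t ∈ Fˣ`, the map `x ↦ x^s - x` commutes with the rescalings `x ↦ t x`;
averaging the Weil sum over them turns it into `∑_x ∑_{t ∈ Fˣ} μ(t (x^s - x))`, and by
transitivity of the trace the inner sum is `q - 1` or `-1` according as `Tr_{L/F}(x^s - x)` vanishes or not.
Hence `(q - 1) W = q N - q^2`, where `N` counts the `x` with `Tr_{L/F}(x^s - x) = 0`.
For `x ≠ 0` the element `v = x^(q-1)` is a `(q+1)`-st root of unity, `x^s - x = (v^k - 1) x`, and
this has trace zero iff `v^k = 1` or `v^(k-1) = 1`. Counting roots of unity in the cyclic group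
`Lˣ` gives `N = 1 + (q - 1)(d₁ + d₂ - 1)`, whence `W = q (d₁ + d₂ - 2)`.
-/

open scoped BigOperators

open Finset

theorem FiniteField.card_pow_eq_one_eq_gcd {E : Type*} [Field E] [Fintype E] [DecidableEq E]
    {d : ℕ} (hd : d ≠ 0) : #{x : E | x ^ d = 1} = (Fintype.card E - 1).gcd d := by
  rw [← Fintype.card_units, ← Nat.card_eq_fintype_card, ← IsCyclic.card_powMonoidHom_ker,
    ← Nat.card_eq_finsetCard]
  refine Nat.card_congr
    { toFun x := ⟨Units.ofPowEqOne x.1 d (mem_filter.1 x.2).2 hd, by simp⟩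
      invFun u := ⟨u.1.1, by simpa using congrArg Units.val (MonoidHom.mem_ker.1 u.2)⟩
      left_inv x := rfl
      right_inv u := Subtype.ext (Units.ext rfl) }

section Tower

variable {K F L : Type*} [Field K] [Field F] [Field L] [Fintype F] [Fintype L]
  [Algebra K F] [Algebra K L] [Algebra F L] [IsScalarTower K F L]

theorem Algebra.trace_mul_algebraMap (b : L) (t : F) :
    Algebra.trace K L (b * algebraMap F L t) = Algebra.trace K F (t * Algebra.trace F L b) := by
  rw [← Algebra.trace_trace (S := F), mul_comm b, ← Algebra.smul_def, LinearMap.map_smul,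
    smul_eq_mul]

theorem AddChar.isPrimitive_compAddMonoidHom_trace {ψ : AddChar K ℂ} (hψ : ψ ≠ 1) :
    (ψ.compAddMonoidHom (Algebra.trace K F).toAddMonoidHom).IsPrimitive := by
  refine AddChar.IsPrimitive.of_ne_one (AddChar.ne_one_iff.2 ?_)
  obtain ⟨a, ha⟩ := AddChar.ne_one_iff.1 hψ
  obtain ⟨y, rfl⟩ := Algebra.trace_surjective K F a
  exact ⟨y, ha⟩

theorem sum_addChar_trace_mul_algebraMap [DecidableEq F] {ψ : AddChar K ℂ} (hψ : ψ ≠ 1)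
    (b : L) :
    ∑ t : F, ψ (Algebra.trace K L (b * algebraMap F L t)) =
      if Algebra.trace F L b = 0 then (Fintype.card F : ℂ) else 0 := by
  simp_rw [Algebra.trace_mul_algebraMap]
  simpa using
    AddChar.sum_mulShift (Algebra.trace F L b) (AddChar.isPrimitive_compAddMonoidHom_trace hψ)

theorem card_sub_one_mul_sum_addChar_trace [DecidableEq F] {ψ : AddChar K ℂ} (hψ : ψ ≠ 1)
    (f : L → L)
    (hf : ∀ x (t : F), t ≠ 0 → f (x * algebraMap F L t) = f x * algebraMap F L t) :
    (Fintype.card F - 1 : ℂ) * ∑ x : L, ψ (Algebra.trace K L (f x)) =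
      Fintype.card F * #{x : L | Algebra.trace F L (f x) = 0} - Fintype.card L := by
  have h_rescale (t : F) (ht : t ≠ 0) : ∑ x : L, ψ (Algebra.trace K L (f x)) =
      ∑ x : L, ψ (Algebra.trace K L (f x * algebraMap F L t)) :=
    (Fintype.sum_bijective (· * algebraMap F L t) (mulRight_bijective₀ _ (by simpa)) _ _
      fun x ↦ by rw [hf x t ht]).symm
  calc (Fintype.card F - 1 : ℂ) * ∑ x : L, ψ (Algebra.trace K L (f x))
      = ∑ t ∈ univ.erase (0 : F), ∑ x : L, ψ (Algebra.trace K L (f x)) := by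
        rw [sum_const, card_erase_of_mem (mem_univ _), card_univ, nsmul_eq_mul,
          Nat.cast_pred Fintype.card_pos]
    _ = ∑ t ∈ univ.erase (0 : F), ∑ x : L, ψ (Algebra.trace K L (f x * algebraMap F L t)) :=
        sum_congr rfl fun t ht ↦ h_rescale t (ne_of_mem_erase ht)
    _ = ∑ x : L, ∑ t ∈ univ.erase (0 : F), ψ (Algebra.trace K L (f x * algebraMap F L t)) :=
        sum_comm
    _ = ∑ x : L, ((if Algebra.trace F L (f x) = 0 then (Fintype.card F : ℂ) else 0) - 1) := by
        refine sum_congr rfl fun x _ ↦ ?_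
        rw [← sum_addChar_trace_mul_algebraMap hψ, ← add_sum_erase _ _ (mem_univ 0)]
        simp
    _ = _ := by
        rw [sum_sub_distrib, sum_ite, sum_const_zero, add_zero, sum_const, sum_const, card_univ]
        simp [mul_comm]

end Tower

namespace FiniteField

theorem pow_one_add_mul_card_sub_one_s14 {K : Type*} [Field K] [Fintype K] (t : K) (k : ℕ) :
    t ^ (1 + k * (Fintype.card K - 1)) = t := by
  rcases eq_or_ne t 0 with rfl | ht
  · simp
  · rw [pow_add, pow_one, mul_comm k, pow_mul, pow_card_sub_one_eq_one t ht, one_pow, mul_one]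

variable {F L : Type*} [Field F] [Field L] [Fintype F] [Fintype L] [Algebra F L]

theorem algebraMap_trace_eq_add_pow_card_s14 (hL : Fintype.card L = Fintype.card F ^ 2) (y : L) :
    algebraMap F L (Algebra.trace F L y) = y + y ^ Fintype.card F := by
  have hrank : Module.finrank F L = 2 :=
    Nat.pow_right_injective Fintype.one_lt_card (Module.card_eq_pow_finrank.symm.trans hL)
  rw [algebraMap_trace_eq_sum_pow, hrank, Nat.card_eq_fintype_card]
  simp [sum_range_succ]

theorem trace_eq_zero_iff_add_pow_card_eq_zero (hL : Fintype.card L = Fintype.card F ^ 2)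
    (y : L) : Algebra.trace F L y = 0 ↔ y + y ^ Fintype.card F = 0 := by
  rw [← algebraMap_trace_eq_add_pow_card_s14 hL, map_eq_zero_iff _ (algebraMap F L).injective]

theorem add_pow_card_eq_zero_iff (hL : Fintype.card L = Fintype.card F ^ 2) {x : L} (hx : x ≠ 0)
    {k : ℕ} (hk : k ≠ 0) :
    (x ^ (1 + k * (Fintype.card F - 1)) - x) +
        (x ^ (1 + k * (Fintype.card F - 1)) - x) ^ Fintype.card F = 0 ↔
      x ^ ((Fintype.card F - 1) * k) = 1 ∨ x ^ ((Fintype.card F - 1) * (k - 1)) = 1 := by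
  set q := Fintype.card F
  obtain ⟨v, hv_def⟩ : ∃ v, v = x ^ (q - 1) := ⟨_, rfl⟩
  have hv : v ≠ 0 := hv_def ▸ pow_ne_zero _ hx
  have hxq : x ^ q = v * x := by rw [hv_def, ← pow_succ, Nat.sub_add_cancel Fintype.card_pos]
  have hexp : (q - 1) * (q + 1) = Fintype.card L - 1 := by
    rw [hL, mul_comm, ← Nat.sq_sub_sq, one_pow]
  have hvq : (v ^ q) ^ k * v ^ k = 1 := by
    rw [← mul_pow, ← pow_succ, hv_def, ← pow_mul x, hexp, pow_card_sub_one_eq_one x hx,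
      one_pow]
  have hb : x ^ (1 + k * (q - 1)) - x = (v ^ k - 1) * x := by
    rw [pow_add, pow_one, mul_comm k, pow_mul, ← hv_def]
    ring
  have hbq : (x ^ (1 + k * (q - 1)) - x) ^ q = ((v ^ q) ^ k - 1) * (v * x) := by
    rw [hb, mul_pow, hxq, ← pow_mul, mul_comm q, pow_mul]
    congr 1
    simpa using map_sub (frobeniusAlgHom F L) (v ^ k) 1
  have key : v ^ k * ((x ^ (1 + k * (q - 1)) - x) + (x ^ (1 + k * (q - 1)) - x) ^ q) =
      x * ((v ^ k - 1) * (v ^ k - v)) := by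
    rw [hbq, hb]
    linear_combination (v * x) * hvq
  have hvk : v ^ k = v ↔ v ^ (k - 1) = 1 := by rw [← pow_sub_one_mul hk v, mul_eq_right₀ hv]
  rw [← mul_right_inj' (pow_ne_zero k hv), key, mul_zero, mul_eq_zero, or_iff_right hx,
    mul_eq_zero, sub_eq_zero, sub_eq_zero, pow_mul, pow_mul, ← hv_def, hvk]

theorem card_trace_pow_sub_eq_zero [DecidableEq F] [DecidableEq L]
    (hL : Fintype.card L = Fintype.card F ^ 2) {k : ℕ} (hk : 2 ≤ k) :
    #{x : L | Algebra.trace F L (x ^ (1 + k * (Fintype.card F - 1)) - x) = 0} +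
        (Fintype.card F - 1) =
      1 + (Fintype.card F - 1) * k.gcd (Fintype.card F + 1) +
        (Fintype.card F - 1) * (k - 1).gcd (Fintype.card F + 1) := by
  set q := Fintype.card F
  have hq : 1 < q := Fintype.one_lt_card
  have hcard (j : ℕ) (hj : j ≠ 0) :
      #{x : L | x ^ ((q - 1) * j) = 1} = (q - 1) * j.gcd (q + 1) := by
    rw [card_pow_eq_one_eq_gcd (mul_ne_zero (by omega) hj), hL, ← one_pow 2, Nat.sq_sub_sq,
      one_pow, mul_comm, Nat.gcd_mul_left, Nat.gcd_comm]
  set N : Finset L := {x | Algebra.trace F L (x ^ (1 + k * (q - 1)) - x) = 0}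
  set A : Finset L := {x | x ^ ((q - 1) * k) = 1}
  set B : Finset L := {x | x ^ ((q - 1) * (k - 1)) = 1}
  set C : Finset L := {x | x ^ (q - 1) = 1}
  have hsplit : N = insert 0 (A ∪ B) := by
    ext x
    by_cases hx : x = 0
    · simp [N, hx]
    · rw [mem_filter, trace_eq_zero_iff_add_pow_card_eq_zero hL,
        add_pow_card_eq_zero_iff hL hx (by omega)]
      simp [A, B, q, hx]
  have hinter : A ∩ B = C := by
    ext x
    simp only [A, B, C, mem_inter, mem_filter, mem_univ, true_and]
    constructor
    · rintro ⟨hxA, hxB⟩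
      rwa [← Nat.sub_add_cancel (by omega : 1 ≤ k), mul_add_one, pow_add, hxB, one_mul] at hxA
    · intro h
      simp [pow_mul, h]
  have h0 : (0 : L) ∉ A ∪ B := by
    simp [A, B, show q - 1 ≠ 0 by omega, show k ≠ 0 by omega, show k - 1 ≠ 0 by omega]
  have hC : #C = q - 1 := by simpa using hcard 1 one_ne_zero
  have := card_union_add_card_inter A B
  rw [hinter, hC, hcard k (by omega), hcard (k - 1) (by omega)] at this
  rw [hsplit, card_insert_of_notMem h0]
  omega

end FiniteField

theorem weil_sum_at_one_general (p n : ℕ) [Fact p.Prime]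
    (F L : Type) [Field F] [Fintype F] [Field L] [Fintype L]
    [Algebra (ZMod p) L] [Algebra F L]
    (hF : Fintype.card F = p ^ n) (hL : Fintype.card L = p ^ (2 * n))
    (k s : ℕ) (hsk : s = 1 + k * (p ^ n - 1)) (hk2 : 2 ≤ k) :
    weilSum p L s 1 =
      (p : ℂ) ^ n * ((Nat.gcd k (p ^ n + 1) : ℂ) + (Nat.gcd (k - 1) (p ^ n + 1) : ℂ) - 2) := by
  classical
  have : CharP L p := charP_of_injective_algebraMap' (ZMod p) p
  have : CharP F p := (algebraMap F L).charP (algebraMap F L).injective p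
  let : Algebra (ZMod p) F := ZMod.algebra F p
  have : IsScalarTower (ZMod p) F L := .of_algebraMap_eq' (Subsingleton.elim _ _)
  have hLF : Fintype.card L = Fintype.card F ^ 2 := by rw [hL, hF, ← pow_mul, mul_comm]
  have hψ : (ZMod.stdAddChar : AddChar (ZMod p) ℂ) ≠ 1 := by
    simpa using ZMod.isPrimitive_stdAddChar p one_ne_zero
  have hW :
      weilSum p L s 1 = ∑ x : L, ZMod.stdAddChar (Algebra.trace (ZMod p) L (x ^ s - x)) := by
    simp only [weilSum, one_mul, ZMod.stdAddChar_apply, ZMod.toCircle_apply]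
  have hpn : (p : ℂ) ^ n = Fintype.card F := by rw [hF, Nat.cast_pow]
  rw [← hF] at hsk
  rw [← hF, hpn, hW, hsk]
  have havg := card_sub_one_mul_sum_addChar_trace (F := F) hψ
    (fun x : L ↦ x ^ (1 + k * (Fintype.card F - 1)) - x)
    fun x t _ ↦ by rw [mul_pow, ← map_pow, FiniteField.pow_one_add_mul_card_sub_one_s14, sub_mul]
  have hcount := congrArg (Nat.cast : ℕ → ℂ) (FiniteField.card_trace_pow_sub_eq_zero hLF hk2)
  have hq : (Fintype.card F : ℂ) - 1 ≠ 0 := by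
    rw [sub_ne_zero, Nat.cast_ne_one]; exact Fintype.one_lt_card.ne'
  rw [← mul_right_inj' hq, havg, hLF]
  push_cast [Nat.cast_sub Fintype.card_pos] at hcount ⊢
  linear_combination (Fintype.card F : ℂ) * hcount

/-- `W_{L,s}(1) = p^n(d₁ + d₂ - 2)`, where `d₁ = gcd(k, p^n+1)` and
`d₂ = gcd(k-1, p^n+1)`. -/
theorem weil_sum_at_one (p n : ℕ) [Fact p.Prime] (hn : 0 < n)
    (F L : Type) [Field F] [Fintype F] [Field L] [Fintype L]
    [Algebra (ZMod p) L] [Algebra F L]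
    (hF : Fintype.card F = p ^ n) (hL : Fintype.card L = p ^ (2 * n))
    (k s : ℕ) (hsk : s = 1 + k * (p ^ n - 1)) (hs : Nat.Coprime s (p ^ (2 * n) - 1))
    (hp : Odd p) (hk2 : 2 ≤ k) (hkp : k ≤ p ^ n) :
    weilSum p L s 1 =
      (p : ℂ) ^ n * ((Nat.gcd k (p ^ n + 1) : ℂ) + (Nat.gcd (k - 1) (p ^ n + 1) : ℂ) - 2) :=
  weil_sum_at_one_general p n F L hF hL k s hsk hk2
end

section
/- Let R = {x ∈ L : (1-x)^s + x^s - 1 = 0}. Then |R| = p^n + (d_1-1)(d_1-2) + (d_2-1)(d_2-2), where d_1 = gcd(k, p^n+1) and d_2 = gcd(k-1, p^n+1). -/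
/-!
Write `q = p ^ n`, so that `x ↦ x ^ q` is the involution of `L` fixing its subfield `F` of
order `q`. Since `s = 1 + k (q - 1)`, we have `x ^ s = x u ^ k` with `u = x ^ (q - 1)`, and every
`x ∈ F` is a solution. For `x ∉ F`, the elements `u = x ^ (q - 1)` and `v = (1 - x) ^ (q - 1)`
lie on the norm-one circle `w ^ (q + 1) = 1`, are distinct and different from `1`, and determine
`x = (1 - v) / (u - v)`; conversely every such pair arises. Frobenius gives
`(1 - x) v + x u = 1`, and combining the equation `(1 - x) v ^ k + x u ^ k = 1` with its conjugate
forces `(u ^ k, v ^ k)` to be `(1, 1)` or `(u, v)`. Hence the solutions outside `F` are counted by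
the ordered pairs of distinct nontrivial `d`-th roots of unity, `d = gcd(k, q + 1)` or
`gcd(k - 1, q + 1)`: `(d - 1)(d - 2)` of each.
-/

open scoped BigOperators

open Finset Polynomial

lemma pow_eq_self_iff_pow_sub_one_eq_one {M₀ : Type*} [MonoidWithZero M₀]
    [IsLeftCancelMulZero M₀] {x : M₀} {m : ℕ} (hm : m ≠ 0) (hx : x ≠ 0) :
    x ^ m = x ↔ x ^ (m - 1) = 1 := by
  rw [← mul_pow_sub_one hm x, mul_eq_left₀ hx]

lemma pow_sub_one_ne_one_of_pow_ne_self {M : Type*} [Monoid M] {x : M} {m : ℕ} (hm : m ≠ 0)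
    (hx : x ^ m ≠ x) : x ^ (m - 1) ≠ 1 := by
  rw [← mul_pow_sub_one hm x] at hx
  exact fun h => hx (by rw [h, mul_one])

lemma ne_zero_of_pow_ne_self {M₀ : Type*} [MonoidWithZero M₀] {x : M₀} {m : ℕ}
    (hm : m ≠ 0) (hx : x ^ m ≠ x) : x ≠ 0 := by
  rintro rfl
  exact hx (zero_pow hm)

lemma pow_eq_one_of_dvd {M : Type*} [Monoid M] {x : M} {a b : ℕ} (hab : a ∣ b)
    (hx : x ^ a = 1) : x ^ b = 1 := by
  obtain ⟨c, rfl⟩ := hab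
  rw [pow_mul, hx, one_pow]

lemma pow_one_add_mul_sub_one_of_pow_eq_self {M : Type*} [Monoid M] {x : M} {m : ℕ}
    (hx : x ^ m = x) (k : ℕ) : x ^ (1 + k * (m - 1)) = x := by
  have hstep : x * x ^ (m - 1) = x := by
    rcases eq_or_ne m 0 with rfl | hm
    · simp
    · rw [mul_pow_sub_one hm, hx]
  induction k with
  | zero => simp
  | succ k ih => rw [show 1 + (k + 1) * (m - 1) = 1 + k * (m - 1) + (m - 1) by ring, pow_add, ih,
      hstep]

lemma card_nthRootsFinset_one_of_dvd {L : Type*} [Field L] [Fintype L] {d : ℕ}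
    (hd : d ∣ Fintype.card L - 1) : #(nthRootsFinset d (1 : L)) = d := by
  classical
  obtain ⟨g, hg⟩ := IsCyclic.exists_ofOrder_eq_natCard (α := Lˣ)
  rw [Nat.card_eq_fintype_card, Fintype.card_units] at hg
  have hprim : IsPrimitiveRoot (g : L) (Fintype.card L - 1) :=
    IsPrimitiveRoot.coe_units_iff.mpr (hg ▸ IsPrimitiveRoot.orderOf g)
  obtain ⟨m, hm⟩ := hd
  have hpos : 0 < Fintype.card L - 1 := Nat.sub_pos_of_lt Fintype.one_lt_card
  exact (hprim.pow hpos (by rw [hm, mul_comm])).card_nthRootsFinset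

lemma eq_one_and_eq_one_or_eq_and_eq {K : Type*} [Field K] {a b u v A B : K}
    (ha : a ≠ 0) (hb : b ≠ 0) (hab : a + b = 1) (huv : a * v + b * u = 1)
    (hAB : a * B + b * A = 1) (hconj : a * v * A + b * u * B = A * B) :
    (A = 1 ∧ B = 1) ∨ (A = u ∧ B = v) := by
  by_cases hA1 : A = 1
  · subst hA1
    have hB1 : a * (B - 1) = 0 := by linear_combination hAB - hab
    exact .inl ⟨rfl, sub_eq_zero.mp ((mul_eq_zero.mp hB1).resolve_left ha)⟩
  · have hB1 : B ≠ 1 := by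
      rintro rfl
      have hA1' : b * (A - 1) = 0 := by linear_combination hAB - hab
      exact hA1 (sub_eq_zero.mp ((mul_eq_zero.mp hA1').resolve_left hb))
    have hBv : (1 - A) * (B - v) = 0 := by
      linear_combination v * hAB - B * huv + hconj - A * v * hab
    have hAu : (1 - B) * (A - u) = 0 := by
      linear_combination u * hAB - A * huv + hconj - B * u * hab
    exact .inr ⟨sub_eq_zero.mp ((mul_eq_zero.mp hAu).resolve_left (sub_ne_zero.mpr hB1.symm)),
      sub_eq_zero.mp ((mul_eq_zero.mp hBv).resolve_left (sub_ne_zero.mpr (Ne.symm hA1)))⟩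

section QuadraticField

variable {L : Type*} [Field L] [Fintype L] {q : ℕ}

lemma two_le_of_card_eq_mul_self (hL : Fintype.card L = q * q) : 2 ≤ q := by
  have := hL ▸ (Fintype.one_lt_card : 1 < Fintype.card L)
  nlinarith

lemma pow_sub_one_pow_add_one_eq_one (hL : Fintype.card L = q * q) {x : L} (hx : x ≠ 0) :
    (x ^ (q - 1)) ^ (q + 1) = 1 := by
  rw [← pow_mul, mul_comm, ← mul_self_tsub_one, ← hL]
  exact FiniteField.pow_card_sub_one_eq_one x hx

lemma card_filter_pow_eq_self [DecidableEq L] (hL : Fintype.card L = q * q) :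
    #{x : L | x ^ q = x} = q := by
  have hq := two_le_of_card_eq_mul_self hL
  have hfixed : ({x : L | x ^ q = x} : Finset L) = insert 0 (nthRootsFinset (q - 1) (1 : L)) := by
    ext x
    rcases eq_or_ne x 0 with rfl | hx
    · simp [zero_pow (by omega : q ≠ 0)]
    · simp [hx, mem_nthRootsFinset (by omega : 0 < q - 1),
        pow_eq_self_iff_pow_sub_one_eq_one (by omega : q ≠ 0) hx]
  rw [hfixed, card_insert_of_notMem
      (by simp [mem_nthRootsFinset (by omega : 0 < q - 1), zero_pow (by omega : q - 1 ≠ 0)]),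
    card_nthRootsFinset_one_of_dvd (by rw [hL, mul_self_tsub_one]; exact dvd_mul_left _ _)]
  omega

end QuadraticField

section FrobeniusConjugation

variable {L : Type*} [Field L] {p n : ℕ} [Fact p.Prime] [CharP L p]

local notation "q" => p ^ n

lemma one_sub_pow_char_pow_add_pow (x : L) : (1 - x) ^ q + x ^ q = 1 := by
  rw [sub_pow_char_pow, one_pow, sub_add_cancel]

lemma one_sub_pow_char_pow_ne_self {x : L} (hx : x ^ q ≠ x) : (1 - x) ^ q ≠ 1 - x := by
  rwa [sub_pow_char_pow, one_pow, Ne, sub_right_inj]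

lemma one_sub_mul_add_mul_pow_sub_one (x : L) :
    (1 - x) * (1 - x) ^ (q - 1) + x * x ^ (q - 1) = 1 := by
  simpa only [mul_pow_sub_one (NeZero.ne (p ^ n))] using one_sub_pow_char_pow_add_pow (n := n) x

lemma pow_sub_one_ne_one_sub_pow_sub_one {x : L} (hx : x ^ q ≠ x) :
    x ^ (q - 1) ≠ (1 - x) ^ (q - 1) := by
  intro huv
  have hrel := one_sub_mul_add_mul_pow_sub_one (n := n) x
  have hv : (1 - x) ^ (q - 1) = 1 := by linear_combination hrel - x * huv
  exact pow_sub_one_ne_one_of_pow_ne_self (NeZero.ne _) (one_sub_pow_char_pow_ne_self hx) hv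

lemma one_sub_pow_add_pow_eq_one_of_pow_eq_self {x : L} (hx : x ^ q = x) (k : ℕ) :
    (1 - x) ^ (1 + k * (q - 1)) + x ^ (1 + k * (q - 1)) = 1 := by
  have h1x : (1 - x) ^ q = 1 - x := by rw [sub_pow_char_pow, one_pow, hx]
  rw [pow_one_add_mul_sub_one_of_pow_eq_self hx, pow_one_add_mul_sub_one_of_pow_eq_self h1x,
    sub_add_cancel]

lemma pow_sub_one_eq_of_mul_sub_eq {u v x : L} (hu : u ^ (q + 1) = 1) (hv : v ^ (q + 1) = 1)
    (huv : u ≠ v) (hv1 : v ≠ 1) (hx : x * (u - v) = 1 - v) : x ^ (q - 1) = u := by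
  have hx0 : x ≠ 0 := by
    rintro rfl
    exact hv1 (by linear_combination hx)
  have hxq : x ^ q * (u ^ q - v ^ q) = 1 - v ^ q := by
    simpa only [mul_pow, sub_pow_char_pow, one_pow] using congrArg (· ^ q) hx
  -- `hxq` is `hx` conjugated; on the circle `u ^ q = u⁻¹` and `v ^ q = v⁻¹`
  rw [pow_succ] at hu hv
  have hfrob : (x ^ q - u * x) * (v - u) = 0 := by
    linear_combination (u * v) * hxq - (x ^ q * v) * hu + (x ^ q * u - u) * hv + u * hx
  refine mul_left_cancel₀ hx0 ?_
  rw [mul_pow_sub_one (NeZero.ne _), mul_comm x u]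
  exact sub_eq_zero.mp ((mul_eq_zero.mp hfrob).resolve_right (sub_ne_zero.mpr huv.symm))

lemma pow_sub_one_div_sub_eq {u v : L} (hu : u ^ (q + 1) = 1) (hv : v ^ (q + 1) = 1)
    (hu1 : u ≠ 1) (hv1 : v ≠ 1) (huv : u ≠ v) :
    ((1 - v) / (u - v)) ^ (q - 1) = u ∧ (1 - (1 - v) / (u - v)) ^ (q - 1) = v := by
  have hx : (1 - v) / (u - v) * (u - v) = 1 - v := div_mul_cancel₀ _ (sub_ne_zero.mpr huv)
  exact ⟨pow_sub_one_eq_of_mul_sub_eq hu hv huv hv1 hx,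
    pow_sub_one_eq_of_mul_sub_eq hv hu huv.symm hu1 (by linear_combination hx)⟩

lemma card_filter_nonfixed_pow_eq_one_of_dvd [Fintype L] [DecidableEq L]
    (hL : Fintype.card L = q * q) {d : ℕ} (hd : d ∣ q + 1) :
    #{x : L | x ^ q ≠ x ∧ (x ^ (q - 1)) ^ d = 1 ∧ ((1 - x) ^ (q - 1)) ^ d = 1} =
      (d - 1) * (d - 2) := by
  have hd0 : 0 < d := Nat.pos_of_dvd_of_pos hd (Nat.succ_pos _)
  set μ := (nthRootsFinset d (1 : L)).erase 1
  have hμ : #μ = d - 1 := by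
    rw [card_erase_of_mem ((mem_nthRootsFinset hd0 _).mpr (one_pow d)),
      card_nthRootsFinset_one_of_dvd (by rw [hL, mul_self_tsub_one]; exact hd.mul_right _)]
  have hmem : ∀ {z : L}, z ∈ μ ↔ z ≠ 1 ∧ z ^ d = 1 := by
    simp [μ, mem_nthRootsFinset hd0]
  have hcircle : ∀ {z : L}, z ∈ μ → z ^ (q + 1) = 1 := fun hz =>
    pow_eq_one_of_dvd hd (hmem.mp hz).2
  have hinv : ∀ w ∈ μ.offDiag, ((1 - w.2) / (w.1 - w.2)) ^ (q - 1) = w.1 ∧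
      (1 - (1 - w.2) / (w.1 - w.2)) ^ (q - 1) = w.2 := fun w hw => by
    obtain ⟨hu, hv, huv⟩ := mem_offDiag.mp hw
    exact pow_sub_one_div_sub_eq (hcircle hu) (hcircle hv) (hmem.mp hu).1 (hmem.mp hv).1 huv
  rw [show (d - 1) * (d - 2) = #μ * #μ - #μ by rw [hμ, ← Nat.mul_sub_one, Nat.sub_sub],
    ← offDiag_card]
  refine card_nbij' (fun x => (x ^ (q - 1), (1 - x) ^ (q - 1))) (fun w => (1 - w.2) / (w.1 - w.2))
    ?_ ?_ ?_ ?_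
  · intro x hx
    obtain ⟨hfix, hu, hv⟩ := (mem_filter.mp hx).2
    refine mem_offDiag.mpr
      ⟨hmem.mpr ⟨pow_sub_one_ne_one_of_pow_ne_self (NeZero.ne _) hfix, hu⟩,
        hmem.mpr ⟨pow_sub_one_ne_one_of_pow_ne_self (NeZero.ne _)
          (one_sub_pow_char_pow_ne_self hfix), hv⟩,
        pow_sub_one_ne_one_sub_pow_sub_one hfix⟩
  · intro w hw
    obtain ⟨hu, hv⟩ := hinv w hw
    obtain ⟨hwu, hwv, huv⟩ := mem_offDiag.mp hw
    have hx0 : (1 - w.2) / (w.1 - w.2) ≠ 0 :=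
      div_ne_zero (sub_ne_zero.mpr (hmem.mp hwv).1.symm) (sub_ne_zero.mpr huv)
    refine mem_filter.mpr ⟨mem_univ _, fun hfix => (hmem.mp hwu).1 ?_,
      by rw [hu]; exact (hmem.mp hwu).2, by rw [hv]; exact (hmem.mp hwv).2⟩
    rw [← hu, ← pow_eq_self_iff_pow_sub_one_eq_one (NeZero.ne _) hx0]
    exact hfix
  · intro x hx
    rw [div_eq_iff (sub_ne_zero.mpr (pow_sub_one_ne_one_sub_pow_sub_one (mem_filter.mp hx).2.1))]
    linear_combination -one_sub_mul_add_mul_pow_sub_one (n := n) x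
  · intro w hw
    exact Prod.ext (hinv w hw).1 (hinv w hw).2

lemma card_filter_nonfixed_pow_eq_one [Fintype L] [DecidableEq L]
    (hL : Fintype.card L = q * q) (m : ℕ) :
    #{x : L | x ^ q ≠ x ∧ (x ^ (q - 1)) ^ m = 1 ∧ ((1 - x) ^ (q - 1)) ^ m = 1} =
      (m.gcd (q + 1) - 1) * (m.gcd (q + 1) - 2) := by
  rw [← card_filter_nonfixed_pow_eq_one_of_dvd hL (Nat.gcd_dvd_right m (q + 1))]
  refine congrArg card (filter_congr fun x _ => and_congr_right fun hfix => ?_)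
  have hcircle := pow_sub_one_pow_add_one_eq_one hL (ne_zero_of_pow_ne_self (NeZero.ne _) hfix)
  have hcircle' := pow_sub_one_pow_add_one_eq_one hL
    (ne_zero_of_pow_ne_self (NeZero.ne _) (one_sub_pow_char_pow_ne_self hfix))
  simp only [pow_gcd_eq_one, hcircle, hcircle', and_true]

lemma one_sub_pow_add_pow_eq_one_iff [Fintype L] (hL : Fintype.card L = q * q) {x : L}
    (hfix : x ^ q ≠ x) {k : ℕ} (hk : k ≠ 0) :
    (1 - x) ^ (1 + k * (q - 1)) + x ^ (1 + k * (q - 1)) = 1 ↔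
      ((x ^ (q - 1)) ^ k = 1 ∧ ((1 - x) ^ (q - 1)) ^ k = 1) ∨
        ((x ^ (q - 1)) ^ (k - 1) = 1 ∧ ((1 - x) ^ (q - 1)) ^ (k - 1) = 1) := by
  have hx0 : x ≠ 0 := ne_zero_of_pow_ne_self (NeZero.ne _) hfix
  have hx1 : 1 - x ≠ 0 := ne_zero_of_pow_ne_self (NeZero.ne _) (one_sub_pow_char_pow_ne_self hfix)
  have hu := pow_sub_one_pow_add_one_eq_one hL hx0
  have hv := pow_sub_one_pow_add_one_eq_one hL hx1
  have hrel := one_sub_mul_add_mul_pow_sub_one (n := n) x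
  have hpow : ∀ y : L, y ^ (1 + k * (q - 1)) = y * (y ^ (q - 1)) ^ k := fun y => by
    rw [pow_add, pow_one, mul_comm k, pow_mul]
  set u := x ^ (q - 1)
  set v := (1 - x) ^ (q - 1)
  rw [hpow, hpow, ← pow_eq_self_iff_pow_sub_one_eq_one hk (pow_ne_zero _ hx0),
    ← pow_eq_self_iff_pow_sub_one_eq_one hk (pow_ne_zero _ hx1)]
  constructor
  · intro hE
    have hEq : (1 - x) * v * (v ^ k) ^ q + x * u * (u ^ k) ^ q = 1 := by
      have h := congrArg (· ^ q) hE
      simp only [add_pow_char_pow, mul_pow, one_pow] at h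
      rwa [← mul_pow_sub_one (NeZero.ne _) x, ← mul_pow_sub_one (NeZero.ne _) (1 - x)] at h
    have hnorm : ∀ w : L, w ^ (q + 1) = 1 → (w ^ k) ^ q * w ^ k = 1 := fun w hw => by
      rw [← pow_succ, ← pow_mul, mul_comm, pow_mul, hw, one_pow]
    have hconj : (1 - x) * v * u ^ k + x * u * v ^ k = u ^ k * v ^ k := by
      linear_combination (u ^ k * v ^ k) * hEq - ((1 - x) * v * u ^ k) * hnorm v hv -
        (x * u * v ^ k) * hnorm u hu
    exact eq_one_and_eq_one_or_eq_and_eq hx1 hx0 (sub_add_cancel 1 x) hrel hE hconj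
  · rintro (⟨hA, hB⟩ | ⟨hA, hB⟩) <;> rw [hA, hB]
    · ring
    · exact hrel

lemma card_filter_nonfixed_solutions [Fintype L] [DecidableEq L] (hL : Fintype.card L = q * q)
    {k : ℕ} (hk : k ≠ 0) :
    #{x : L | x ^ q ≠ x ∧ (1 - x) ^ (1 + k * (q - 1)) + x ^ (1 + k * (q - 1)) = 1} =
      (k.gcd (q + 1) - 1) * (k.gcd (q + 1) - 2) +
        ((k - 1).gcd (q + 1) - 1) * ((k - 1).gcd (q + 1) - 2) := by
  rw [← card_filter_nonfixed_pow_eq_one hL k, ← card_filter_nonfixed_pow_eq_one hL (k - 1),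
    ← card_union_of_disjoint, ← filter_or]
  · exact congrArg card (filter_congr fun x _ => by
      rw [← and_or_left]
      exact and_congr_right (one_sub_pow_add_pow_eq_one_iff hL · hk))
  · refine disjoint_filter.mpr fun x _ ⟨hfix, hk1, _⟩ ⟨_, hk0, _⟩ =>
      pow_sub_one_ne_one_of_pow_ne_self (NeZero.ne _) hfix ?_
    rw [← hk1, ← pow_sub_one_mul hk, hk0, one_mul]

end FrobeniusConjugation

theorem card_solution_set_general (p n : ℕ) [Fact p.Prime]
    (L : Type) [Field L] [Fintype L]
    [Algebra (ZMod p) L]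
    (hL : Fintype.card L = p ^ (2 * n))
    (k s : ℕ) (hsk : s = 1 + k * (p ^ n - 1))
    (hk2 : 2 ≤ k) :
    Nat.card {x : L // (1 - x) ^ s + x ^ s = 1} =
      p ^ n + (Nat.gcd k (p ^ n + 1) - 1) * (Nat.gcd k (p ^ n + 1) - 2) +
        (Nat.gcd (k - 1) (p ^ n + 1) - 1) * (Nat.gcd (k - 1) (p ^ n + 1) - 2) := by
  classical
  have : CharP L p := charP_of_injective_algebraMap (algebraMap (ZMod p) L).injective p
  have hLq : Fintype.card L = p ^ n * p ^ n := by rw [hL, two_mul, pow_add]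
  subst hsk
  rw [Nat.card_eq_fintype_card, Fintype.card_subtype,
    ← card_filter_add_card_filter_not (fun x : L => x ^ p ^ n = x), filter_filter, filter_filter,
    add_assoc, ← card_filter_nonfixed_solutions hLq (by omega : k ≠ 0)]
  congr 1
  · refine (congrArg card (filter_congr fun x _ => and_iff_right_of_imp fun hfix =>
      one_sub_pow_add_pow_eq_one_of_pow_eq_self hfix k)).trans (card_filter_pow_eq_self hLq)
  · exact congrArg card (filter_congr fun x _ => and_comm)

/-- with `R = {x ∈ L : (1-x)^s + x^s = 1}`,
`|R| = p^n + (d₁-1)(d₂-2) + (d₂-1)(d₂-2)` where `d₁ = gcd(k, p^n+1)`,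
`d₂ = gcd(k-1, p^n+1)`. -/
theorem card_solution_set (p n : ℕ) [Fact p.Prime] (hn : 0 < n)
    (F L : Type) [Field F] [Fintype F] [Field L] [Fintype L]
    [Algebra (ZMod p) L] [Algebra F L]
    (hF : Fintype.card F = p ^ n) (hL : Fintype.card L = p ^ (2 * n))
    (k s : ℕ) (hsk : s = 1 + k * (p ^ n - 1)) (hs : Nat.Coprime s (p ^ (2 * n) - 1))
    (hp : Odd p) (hk2 : 2 ≤ k) :
    Nat.card {x : L // (1 - x) ^ s + x ^ s = 1} =
      p ^ n + (Nat.gcd k (p ^ n + 1) - 1) * (Nat.gcd k (p ^ n + 1) - 2) +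
        (Nat.gcd (k - 1) (p ^ n + 1) - 1) * (Nat.gcd (k - 1) (p ^ n + 1) - 2) :=
  card_solution_set_general p n L hL k s hsk hk2
end

section
/- For 0 ≤ k ≤ p^n, the exponents s = 1 + k(p^n-1) and s' = 1 + (2-k+p^n)(p^n-1) give the same number of solutions x ∈ L to the equation (1-x)^s + x^s = 1 (respectively with s'). -/
open scoped BigOperators

theorem charL (p N : ℕ) [hpf : Fact p.Prime] (L : Type) [Field L] [Fintype L]
    (hL : Fintype.card L = p ^ N) : CharP L p := by
  haveI : CharP L (ringChar L) := ringChar.charP L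
  obtain ⟨m, hr, hcard⟩ := FiniteField.card L (ringChar L)
  have hrp : ringChar L = p := by
    have heq : ringChar L ^ (m : ℕ) = p ^ N := hcard ▸ hL
    have : ringChar L ∣ p ^ N := heq ▸ dvd_pow_self _ m.pos.ne'
    exact (Nat.prime_dvd_prime_iff_eq hr hpf.out).mp (hr.dvd_of_dvd_pow this)
  exact hrp ▸ ringChar.charP L

/-- for `0 ≤ k ≤ p^n`, the exponents `s = 1 + k(p^n-1)` and
`s' = 1 + (2-k+p^n)(p^n-1)` give the same number of solutions `x ∈ L` of
`(1-x)^s + x^s = 1`. -/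
theorem card_solution_set_symmetry (p n : ℕ) [Fact p.Prime] (hp : Odd p) (hn : 0 < n)
    (F L : Type) [Field F] [Fintype F] [Field L] [Fintype L] [Algebra F L]
    (hF : Fintype.card F = p ^ n) (hL : Fintype.card L = p ^ (2 * n))
    (k : ℕ) (hkp : k ≤ p ^ n)
    (hs : Nat.Coprime (1 + k * (p ^ n - 1)) (p ^ (2 * n) - 1)) :
    Nat.card {x : L // (1 - x) ^ (1 + k * (p ^ n - 1)) + x ^ (1 + k * (p ^ n - 1)) = 1} =
      Nat.card {x : L // (1 - x) ^ (1 + (p ^ n + 2 - k) * (p ^ n - 1)) +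
        x ^ (1 + (p ^ n + 2 - k) * (p ^ n - 1)) = 1} := by
  haveI hch : CharP L p := charL p (2 * n) L hL
  set q := p ^ n with hq
  have hq1 : 1 ≤ q := Nat.one_le_pow _ _ (Fact.out (p := p.Prime)).pos
  set s := 1 + k * (q - 1) with hsdef
  set s' := 1 + (q + 2 - k) * (q - 1) with hs'def
  set M := p ^ (2 * n) - 1 with hM
  have hqq : p ^ (2 * n) = q * q := by rw [two_mul, pow_add]
  have key : s' + M * k = s * q + M := by
    rw [hs'def, hsdef, hM, hqq]
    have hqq1 : 1 ≤ q * q := Nat.one_le_iff_ne_zero.mpr (by positivity)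
    have hk2 : k ≤ q + 2 := by omega
    zify [hq1, hkp, hqq1, hk2]
    ring
  have hx : ∀ x : L, x ^ s' = (x ^ s) ^ q := by
    intro x
    rcases eq_or_ne x 0 with rfl | hx0
    · rw [zero_pow (by positivity), zero_pow (by positivity), zero_pow (by positivity)]
    · have hu : x ^ M = 1 := by
        rw [hM, ← hL]; exact FiniteField.pow_card_sub_one_eq_one x hx0
      calc x ^ s' = x ^ s' * (x ^ M) ^ k := by rw [hu, one_pow, mul_one]
        _ = x ^ (s' + M * k) := by rw [← pow_mul, ← pow_add]
        _ = x ^ (s * q + M) := by rw [key]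
        _ = (x ^ s) ^ q * x ^ M := by rw [pow_add, pow_mul]
        _ = (x ^ s) ^ q := by rw [hu, mul_one]
  have hiff : ∀ x : L, ((1 - x) ^ s + x ^ s = 1) ↔ ((1 - x) ^ s' + x ^ s' = 1) := by
    intro x
    rw [hx, hx, hq, ← add_pow_char_pow]
    constructor
    · intro h; rw [h, one_pow]
    · intro h
      set a := (1 - x) ^ s + x ^ s
      have : (a - 1) ^ p ^ n = 0 := by
        rw [sub_pow_char_pow, h, one_pow, sub_self]
      exact sub_eq_zero.mp (pow_eq_zero_iff (n := p ^ n) (by positivity) |>.mp this)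
  exact Nat.card_congr (Equiv.subtypeEquivRight hiff)
end
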